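/- Let d ≥ 1, μ ∈ ℝ^d, σ > 0, σ_s > 0 and θ ∈ ℝ^d with θ ≠ 0. The smoothed classification error of the linear classifier f_θ(x) = sign(⟨θ,x⟩) for the conditional Gaussian model with mean μ and variance σ², namely PE^{σ_s}(θ) = ½·(N(μ, σ²I_d) ⊗ N(0, σ_s²I_d))({(x, δ) : ⟨θ, x + δ⟩ ≤ 0}) + ½·(N(−μ, σ²I_d) ⊗ N(0, σ_s²I_d))({(x, δ) : ⟨θ, x + δ⟩ ≥ 0}), equals Φ(−⟨θ, μ⟩/(‖θ‖₂·√(σ² + σ_s²))). -/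

import Mathlib

/-!
The characteristic function of `gaussN d m v` is `t ↦ exp (i⟪t, m⟫ - v‖t‖²/2)`. Hence the
smoothed input `x + δ` is again Gaussian, with the variances added, and `⟪θ, x + δ⟫` is a real
Gaussian with mean `±⟪θ, μ⟫` and variance `‖θ‖²(σ² + σ_s²)`. Standardizing turns both error
terms into `Φ(-⟪θ, μ⟫ / (‖θ‖ √(σ² + σ_s²)))`, the second one after the reflection `x ↦ -x`.
-/

open MeasureTheory ProbabilityTheory
open scoped RealInnerProductSpace NNReal

/-- The multivariate Gaussian measure `N(m, v·I_d)` on `ℝ^d = EuclideanSpace ℝ (Fin d)`. -/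
noncomputable def gaussN (d : ℕ) (m : EuclideanSpace ℝ (Fin d)) (v : ℝ≥0) :
    Measure (EuclideanSpace ℝ (Fin d)) :=
  (Measure.pi fun i => gaussianReal (m i) v).map
    (MeasurableEquiv.toLp 2 (Fin d → ℝ))

/-- The standard Gaussian cumulative distribution function `Φ`. -/
noncomputable def Phi (z : ℝ) : ℝ := (gaussianReal 0 1 (Set.Iic z)).toReal

lemma charFun_map_inner {E : Type*} [NormedAddCommGroup E] [InnerProductSpace ℝ E]
    [MeasurableSpace E] [OpensMeasurableSpace E] (μ : Measure E) (θ : E) (s : ℝ) :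
    charFun (μ.map (⟪θ, ·⟫)) s = charFun μ (s • θ) := by
  rw [charFun_apply, charFun_apply, integral_map (by fun_prop) (by fun_prop)]
  simp_rw [real_inner_smul_right, real_inner_comm θ, RCLike.inner_apply, conj_trivial]

lemma toReal_gaussianReal_Iic (m t : ℝ) {v : ℝ≥0} (hv : v ≠ 0) :
    (gaussianReal m v (Set.Iic t)).toReal = Phi ((t - m) / √v) := by
  have hstd : (gaussianReal m v).map (fun x => (x - m) / √v) = gaussianReal 0 1 := by
    have hsub : (fun x => (x - m) / √v) = (· / √(v : ℝ)) ∘ (· - m) := rfl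
    rw [hsub, ← Measure.map_map (by fun_prop) (by fun_prop), gaussianReal_map_sub_const,
      gaussianReal_map_div_const, sub_self, zero_div]
    congr 1
    ext
    simp [hv]
  have hsqrt : 0 < √(v : ℝ) := by positivity
  rw [Phi, ← hstd, Measure.map_apply (by fun_prop) measurableSet_Iic]
  congr 2
  ext x
  simp [div_le_div_iff_of_pos_right hsqrt]

lemma toReal_gaussianReal_Ici (m t : ℝ) {v : ℝ≥0} (hv : v ≠ 0) :
    (gaussianReal m v (Set.Ici t)).toReal = Phi ((m - t) / √v) := by
  have hneg : (fun x : ℝ => -x) ⁻¹' Set.Ici t = Set.Iic (-t) := by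
    ext
    simp
  rw [← neg_neg m, ← gaussianReal_map_neg, Measure.map_apply (by fun_prop) measurableSet_Ici,
    hneg, toReal_gaussianReal_Iic _ _ hv]
  congr 2
  ring

instance isProbabilityMeasure_gaussN (d : ℕ) (m : EuclideanSpace ℝ (Fin d)) (v : ℝ≥0) :
    IsProbabilityMeasure (gaussN d m v) :=
  Measure.isProbabilityMeasure_map (by fun_prop)

open Complex in
lemma charFun_gaussN (d : ℕ) (m : EuclideanSpace ℝ (Fin d)) (v : ℝ≥0)
    (t : EuclideanSpace ℝ (Fin d)) :
    charFun (gaussN d m v) t = exp (⟪t, m⟫ * I - v * ‖t‖ ^ 2 / 2) := by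
  rw [gaussN, MeasurableEquiv.coe_toLp, charFun_pi]
  simp_rw [charFun_gaussianReal, ← Complex.exp_sum]
  congr 1
  rw [← Complex.ofReal_pow, EuclideanSpace.real_norm_sq_eq, PiLp.inner_apply]
  simp only [RCLike.inner_apply, conj_trivial, Finset.sum_sub_distrib]
  push_cast
  rw [Finset.sum_mul, Finset.mul_sum, Finset.sum_div]
  congr 1
  exact Finset.sum_congr rfl fun i _ => by ring

lemma gaussN_conv_gaussN (d : ℕ) (m₁ m₂ : EuclideanSpace ℝ (Fin d)) (v₁ v₂ : ℝ≥0) :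
    gaussN d m₁ v₁ ∗ gaussN d m₂ v₂ = gaussN d (m₁ + m₂) (v₁ + v₂) := by
  refine Measure.ext_of_charFun (funext fun t => ?_)
  simp_rw [charFun_conv, charFun_gaussN, ← Complex.exp_add, inner_add_right]
  push_cast
  congr 1
  ring

lemma map_inner_gaussN (d : ℕ) (m : EuclideanSpace ℝ (Fin d)) (v : ℝ≥0)
    (θ : EuclideanSpace ℝ (Fin d)) :
    (gaussN d m v).map (⟪θ, ·⟫) = gaussianReal ⟪θ, m⟫ (‖θ‖₊ ^ 2 * v) := by
  refine Measure.ext_of_charFun (funext fun s => ?_)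
  rw [charFun_map_inner, charFun_gaussN, charFun_gaussianReal, real_inner_smul_left,
    ← Complex.ofReal_pow, norm_smul, mul_pow, Real.norm_eq_abs, sq_abs]
  push_cast
  congr 1
  ring

lemma map_inner_add_prod_gaussN (d : ℕ) (m₁ m₂ : EuclideanSpace ℝ (Fin d)) (v₁ v₂ : ℝ≥0)
    (θ : EuclideanSpace ℝ (Fin d)) :
    ((gaussN d m₁ v₁).prod (gaussN d m₂ v₂)).map (fun p => ⟪θ, p.1 + p.2⟫)
      = gaussianReal ⟪θ, m₁ + m₂⟫ (‖θ‖₊ ^ 2 * (v₁ + v₂)) := by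
  rw [← map_inner_gaussN, ← gaussN_conv_gaussN, Measure.conv,
    Measure.map_map (by fun_prop) (by fun_prop)]
  rfl

theorem stmt13_general (d : ℕ) (μ : EuclideanSpace ℝ (Fin d)) (σ : ℝ) (hσ : 0 < σ)
    (σs : ℝ) (θ : EuclideanSpace ℝ (Fin d)) (hθ : θ ≠ 0) :
    1 / 2 * (((gaussN d μ ⟨σ ^ 2, sq_nonneg σ⟩).prod
          (gaussN d 0 ⟨σs ^ 2, sq_nonneg σs⟩))
        {p : EuclideanSpace ℝ (Fin d) × EuclideanSpace ℝ (Fin d) |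
          ⟪θ, p.1 + p.2⟫ ≤ 0}).toReal
      + 1 / 2 * (((gaussN d (-μ) ⟨σ ^ 2, sq_nonneg σ⟩).prod
            (gaussN d 0 ⟨σs ^ 2, sq_nonneg σs⟩))
          {p : EuclideanSpace ℝ (Fin d) × EuclideanSpace ℝ (Fin d) |
            0 ≤ ⟪θ, p.1 + p.2⟫}).toReal
      = Phi (-⟪θ, μ⟫ / (‖θ‖ * Real.sqrt (σ ^ 2 + σs ^ 2))) := by
  set v₁ : ℝ≥0 := ⟨σ ^ 2, sq_nonneg σ⟩
  set v₂ : ℝ≥0 := ⟨σs ^ 2, sq_nonneg σs⟩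
  set v : ℝ≥0 := ‖θ‖₊ ^ 2 * (v₁ + v₂)
  have hsqrt : √(v : ℝ) = ‖θ‖ * √(σ ^ 2 + σs ^ 2) := by
    rw [NNReal.coe_mul, NNReal.coe_pow, coe_nnnorm, Real.sqrt_mul (sq_nonneg _),
      Real.sqrt_sq (norm_nonneg _)]
    rfl
  have hv : v ≠ 0 := by
    rw [← NNReal.coe_ne_zero, ← Real.sqrt_ne_zero v.coe_nonneg, hsqrt]
    have := norm_pos_iff.mpr hθ
    positivity
  have hlaw (m : EuclideanSpace ℝ (Fin d)) (s : Set ℝ) (hs : MeasurableSet s) :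
      ((gaussN d m v₁).prod (gaussN d 0 v₂)) {p | ⟪θ, p.1 + p.2⟫ ∈ s}
        = gaussianReal ⟪θ, m⟫ v s := by
    have hmap := map_inner_add_prod_gaussN d m 0 v₁ v₂ θ
    rw [add_zero] at hmap
    rw [← hmap, Measure.map_apply (by fun_prop) hs]
    rfl
  simp only [← Set.mem_Iic (b := (0 : ℝ)), ← Set.mem_Ici (b := (0 : ℝ))]
  rw [hlaw _ _ measurableSet_Iic, toReal_gaussianReal_Iic _ _ hv,
    hlaw _ _ measurableSet_Ici, toReal_gaussianReal_Ici _ _ hv, inner_neg_right, hsqrt,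
    zero_sub, sub_zero, neg_div]
  ring

/-- The smoothed classification error of `f_θ(x) = sign(⟨θ,x⟩)` under the
conditional Gaussian model `x|y ∼ N(yμ, σ²I_d)` with Gaussian smoothing noise
`δ ∼ N(0, σ_s²I_d)` equals `Φ(−⟨θ,μ⟩/(‖θ‖₂·√(σ² + σ_s²)))`. -/
theorem stmt13 (d : ℕ) (hd : 1 ≤ d) (μ : EuclideanSpace ℝ (Fin d)) (σ : ℝ) (hσ : 0 < σ)
    (σs : ℝ) (hσs : 0 < σs) (θ : EuclideanSpace ℝ (Fin d)) (hθ : θ ≠ 0) :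
    1 / 2 * (((gaussN d μ ⟨σ ^ 2, sq_nonneg σ⟩).prod
          (gaussN d 0 ⟨σs ^ 2, sq_nonneg σs⟩))
        {p : EuclideanSpace ℝ (Fin d) × EuclideanSpace ℝ (Fin d) |
          ⟪θ, p.1 + p.2⟫ ≤ 0}).toReal
      + 1 / 2 * (((gaussN d (-μ) ⟨σ ^ 2, sq_nonneg σ⟩).prod
            (gaussN d 0 ⟨σs ^ 2, sq_nonneg σs⟩))
          {p : EuclideanSpace ℝ (Fin d) × EuclideanSpace ℝ (Fin d) |
            0 ≤ ⟪θ, p.1 + p.2⟫}).toReal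
      = Phi (-⟪θ, μ⟫ / (‖θ‖ * Real.sqrt (σ ^ 2 + σs ^ 2))) :=
  stmt13_general d μ σ hσ σs θ hθ
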